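/- arXiv:0808.1404 — 6 statements merged into one kernel-verified Lean document; each statement's English description precedes it below -/
import Mathlib

section
/- Let S be a semigroup and ω a weight on S. The weighted semigroup algebra ℓ¹(S,ω) is a right dual Banach algebra with predual c₀(S,ω) (i.e. c₀(S,ω)·ℓ¹(S,ω) ⊆ c₀(S,ω)) if and only if 1_{t⁻¹s}/ω ∈ c₀(S) for all s, t ∈ S. -/
open Set Filter

/-- A function on `S` "vanishes at infinity" (belongs to `c₀(S)`). -/
def IsC0 {S : Type*} (g : S → ℝ) : Prop := ∀ ε > 0, {x | ε ≤ |g x|}.Finite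

/-- A weight on a semigroup: positive and submultiplicative. -/
def IsWeight {S : Type*} [Mul S] (ω : S → ℝ) : Prop :=
  (∀ s, 0 < ω s) ∧ ∀ s t, ω (s * t) ≤ ω s * ω t

/-- Membership in `ℓ¹(S, ω)`. -/
def MemL1 {S : Type*} (ω f : S → ℝ) : Prop := Summable fun s => |f s| * ω s

/-- Membership in `c₀(S, ω) = {φ ∈ ℓ∞(S,ω) : φ/ω ∈ c₀(S)}`. -/
def IsC0w {S : Type*} (ω φ : S → ℝ) : Prop := IsC0 fun s => φ s / ω s

/-- The left module action `φ · f` of `f ∈ ℓ¹(S,ω)` on `φ ∈ ℓ∞(S,ω)`,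
determined by `⟨φ·f, g⟩ = ⟨φ, f*g⟩`; pointwise `(φ·f)(r) = ∑_u f(u) φ(u r)`. -/
noncomputable def act {S : Type*} [Mul S] (f φ : S → ℝ) : S → ℝ :=
  fun r => ∑' u, f u * φ (u * r)

/-- The right module action `f · φ`, determined by `⟨f·φ, g⟩ = ⟨φ, g*f⟩`;
pointwise `(f·φ)(r) = ∑_u f(u) φ(r u)`. -/
noncomputable def actR {S : Type*} [Mul S] (f φ : S → ℝ) : S → ℝ :=
  fun r => ∑' u, f u * φ (r * u)

/-- A semigroup is weakly cancellative if `s⁻¹F` and `Fs⁻¹` are finite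
for every `s` and every finite `F`. -/
def WeaklyCancellative (S : Type*) [Mul S] : Prop :=
  ∀ (s : S) (F : Finset S), {t | s * t ∈ F}.Finite ∧ {t | t * s ∈ F}.Finite

/-!
Testing the action on point masses, `e_s · e_t = 1_{t⁻¹s}`, gives necessity.

Conversely, let `φ ∈ c₀(S,ω)`. For fixed `u`, the function `r ↦ φ(ur)/ω(r)` vanishes at infinity:
where it is at least `δ`, submultiplicativity of `ω` puts `ur` into the finite set where
`|φ/ω| ≥ δ/ω(u)`, and then `r` lies in a fibre `u⁻¹(ur)` with `ω(r) ≤ |φ(ur)|/δ`, of which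
there are finitely many elements. Since `|φ| ≤ Mω`, the series `(φ·f)(r)/ω(r) = ∑ f(u) φ(ur)/ω(r)`
converges uniformly in `r` (its tail is bounded by `M ∑ |f(u)| ω(u)`), so `(φ·f)/ω` is a uniform
limit of functions vanishing at infinity.
-/

open Topology

theorem isC0_iff_tendsto {S : Type*} {g : S → ℝ} : IsC0 g ↔ Tendsto g cofinite (𝓝 0) := by
  simp only [IsC0, Metric.tendsto_nhds, eventually_cofinite, Real.dist_eq, sub_zero, not_lt]

namespace IsC0

variable {S : Type*} {g : S → ℝ}

theorem of_finite_support (hg : (Function.support g).Finite) : IsC0 g :=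
  fun ε hε => hg.subset fun x hx h0 => by
    simp only [mem_ofPred_eq, h0, abs_zero] at hx
    linarith

theorem exists_bound (hg : IsC0 g) : ∃ M, 0 < M ∧ ∀ x, |g x| ≤ M := by
  obtain ⟨B, hB⟩ := (isC0_iff_tendsto.1 hg).abs.bddAbove_range_of_cofinite
  exact ⟨max B 1, by positivity, fun x => (hB (mem_range_self x)).trans (le_max_left _ _)⟩

theorem of_forall_approx (happrox : ∀ ε > 0, ∃ h, IsC0 h ∧ ∀ x, |g x - h x| ≤ ε) : IsC0 g := by
  intro ε hε
  obtain ⟨h, hh, hgh⟩ := happrox (ε / 2) (half_pos hε)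
  refine (hh (ε / 2) (half_pos hε)).subset fun x hx => ?_
  simp only [mem_ofPred_eq] at hx ⊢
  linarith [hgh x, abs_sub_abs_le_abs_sub (g x) (h x)]

end IsC0

section Weighted

variable {S : Type*} {ω : S → ℝ}

theorem IsC0w.of_finite_support {φ : S → ℝ} (hφ : (Function.support φ).Finite) : IsC0w ω φ :=
  IsC0.of_finite_support <| hφ.subset fun x hx h0 => hx (by simp [h0])

theorem MemL1.of_finite_support {f : S → ℝ} (hf : (Function.support f).Finite) : MemL1 ω f :=
  summable_of_hasFiniteSupport <| hf.subset fun x hx h0 => hx (by simp [h0])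

theorem IsC0w.exists_bound (hω : ∀ s, 0 < ω s) {φ : S → ℝ} (hφ : IsC0w ω φ) :
    ∃ M, 0 < M ∧ ∀ x, |φ x| ≤ M * ω x := by
  obtain ⟨M, hM, hφM⟩ := IsC0.exists_bound hφ
  refine ⟨M, hM, fun x => ?_⟩
  have := hφM x
  rwa [abs_div, abs_of_pos (hω x), div_le_iff₀ (hω x)] at this

theorem finite_setOf_mem_weight_le_of_isC0 (hω : ∀ s, 0 < ω s) {A : Set S}
    (hA : IsC0 fun r => A.indicator 1 r / ω r) (C : ℝ) : {r | r ∈ A ∧ ω r ≤ C}.Finite := by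
  rcases le_or_gt C 0 with hC | hC
  · convert finite_empty
    exact eq_empty_of_forall_notMem fun r hr => (hω r).not_ge (hr.2.trans hC)
  refine (hA (1 / C) (one_div_pos.2 hC)).subset fun r ⟨hrA, hrC⟩ => ?_
  simp only [mem_ofPred_eq, indicator_of_mem hrA, Pi.one_apply, abs_div, abs_one,
    abs_of_pos (hω r)]
  exact one_div_le_one_div_of_le (hω r) hrC

variable [Mul S]

theorem act_indicator_singleton (s t : S) :
    act (({t} : Set S).indicator 1) (({s} : Set S).indicator 1) = {r | t * r = s}.indicator 1 := by
  funext r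
  rw [act, tsum_eq_single t fun u hu => by simp [hu]]
  by_cases hts : t * r = s <;> simp [indicator, hts]

theorem isC0_comp_mul_left_div (hω : IsWeight ω)
    (hfib : ∀ s t : S, IsC0 fun r => {r | t * r = s}.indicator 1 r / ω r)
    {φ : S → ℝ} (hφ : IsC0w ω φ) (u : S) : IsC0 fun r => φ (u * r) / ω r := by
  intro δ hδ
  refine ((hφ (δ / ω u) (div_pos hδ (hω.1 u))).biUnion fun x _ =>
    finite_setOf_mem_weight_le_of_isC0 hω.1 (hfib x u) (|φ x| / δ)).subset fun r hr => ?_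
  have hδr : δ * ω r ≤ |φ (u * r)| := by
    rwa [mem_ofPred_eq, abs_div, abs_of_pos (hω.1 r), le_div_iff₀ (hω.1 r)] at hr
  refine mem_biUnion (x := u * r) ?_ ⟨rfl, ?_⟩
  · rw [mem_ofPred_eq, abs_div, abs_of_pos (hω.1 _), div_le_div_iff₀ (hω.1 u) (hω.1 _)]
    calc δ * ω (u * r) ≤ δ * (ω u * ω r) := mul_le_mul_of_nonneg_left (hω.2 u r) hδ.le
      _ = δ * ω r * ω u := by ring
      _ ≤ |φ (u * r)| * ω u := mul_le_mul_of_nonneg_right hδr (hω.1 u).le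
  · rwa [le_div_iff₀ hδ, mul_comm]

theorem abs_act_sub_sum_le (hω : IsWeight ω) {φ f : S → ℝ} {M : ℝ} (hM : 0 ≤ M)
    (hφM : ∀ x, |φ x| ≤ M * ω x) (hf : MemL1 ω f) (T : Finset S) (r : S) :
    |act f φ r - ∑ u ∈ T, f u * φ (u * r)| ≤ M * ω r * ∑' u : {x // x ∉ T}, |f u| * ω u := by
  have hterm : ∀ u, |f u * φ (u * r)| ≤ M * ω r * (|f u| * ω u) := fun u =>
    calc |f u * φ (u * r)| = |f u| * |φ (u * r)| := abs_mul _ _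
      _ ≤ |f u| * (M * (ω u * ω r)) := by
        gcongr
        exact (hφM _).trans (mul_le_mul_of_nonneg_left (hω.2 u r) hM)
      _ = M * ω r * (|f u| * ω u) := by ring
  have hsum : Summable fun u => f u * φ (u * r) := (hf.mul_left _).of_norm_bounded hterm
  rw [act, ← hsum.sum_add_tsum_compl (s := T), add_sub_cancel_left, ← tsum_mul_left]
  have habs : Summable fun u : ((T : Set S)ᶜ : Set S) => ‖f u * φ (u * r)‖ :=
    hsum.norm.subtype _
  calc _ ≤ ∑' u : ((T : Set S)ᶜ : Set S), ‖f u * φ (u * r)‖ := norm_tsum_le_tsum_norm habs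
    _ ≤ _ := habs.tsum_le_tsum (fun u => hterm u) ((hf.mul_left _).subtype _)

theorem isC0w_act (hω : IsWeight ω)
    (hfib : ∀ s t : S, IsC0 fun r => {r | t * r = s}.indicator 1 r / ω r)
    {φ : S → ℝ} (hφ : IsC0w ω φ) {f : S → ℝ} (hf : MemL1 ω f) : IsC0w ω (act f φ) := by
  obtain ⟨M, hM, hφM⟩ := hφ.exists_bound hω.1
  refine IsC0.of_forall_approx fun ε hε => ?_
  obtain ⟨T, hT⟩ := ((tendsto_tsum_compl_atTop_zero fun u => |f u| * ω u).eventually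
    (eventually_le_nhds (div_pos hε hM))).exists
  refine ⟨fun r => ∑ u ∈ T, f u * φ (u * r) / ω r, ?_, fun r => ?_⟩
  · simp_rw [mul_div_assoc]
    refine isC0_iff_tendsto.2 ?_
    simpa using tendsto_finsetSum T fun u _ =>
      (isC0_iff_tendsto.1 (isC0_comp_mul_left_div hω hfib hφ u)).const_mul (f u)
  · dsimp only
    rw [← Finset.sum_div, ← sub_div, abs_div, abs_of_pos (hω.1 r), div_le_iff₀ (hω.1 r)]
    calc _ ≤ M * ω r * ∑' u : {x // x ∉ T}, |f u| * ω u :=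
          abs_act_sub_sum_le hω hM.le hφM hf T r
      _ ≤ M * ω r * (ε / M) := by gcongr; exact mul_nonneg hM.le (hω.1 r).le
      _ = ε * ω r := by field_simp

end Weighted

/-- `ℓ¹(S,ω)` is a right dual Banach algebra with predual `c₀(S,ω)`
(i.e. `c₀(S,ω) · ℓ¹(S,ω) ⊆ c₀(S,ω)`) iff `1_{t⁻¹s}/ω ∈ c₀(S)` for all `s, t`. -/
theorem rightDual_iff {S : Type*} [Semigroup S] {ω : S → ℝ} (hω : IsWeight ω) :
    (∀ φ : S → ℝ, IsC0w ω φ → ∀ f : S → ℝ, MemL1 ω f → IsC0w ω (act f φ)) ↔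
      ∀ s t : S, IsC0 fun r => Set.indicator {r | t * r = s} (1 : S → ℝ) r / ω r := by
  refine ⟨fun H s t => ?_, fun hfib φ hφ f hf => isC0w_act hω hfib hφ hf⟩
  rw [← act_indicator_singleton]
  exact H _ (.of_finite_support ((finite_singleton s).subset support_indicator_subset))
    _ (.of_finite_support ((finite_singleton t).subset support_indicator_subset))
end

section
/- Let S be a semigroup and ω a weight on S. Define ω_l(t) = sup_{s∈S} ω(st)/ω(t) and ω_r(t) = sup_{s∈S} ω(ts)/ω(t). If ω_l ∈ c₀(S) and ω_r ∈ c₀(S), then 1_{t⁻¹s}/ω ∈ c₀(S) and 1_{st⁻¹}/ω ∈ c₀(S) for all s, t ∈ S, so ℓ¹(S,ω) is a dual Banach algebra with predual c₀(S). -/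
open Set Filter

/-!
Everything reduces to the decay `ω(ur)/ω(r) → 0` as `r → ∞` for each fixed `u`, which holds because
`ω_l(r)` dominates it. On the fibre `tr = s` one has `1/ω(r) = ω(tr)/(ω(s) ω(r))`. For the action,
`(φ·f)(r)/ω(r) = ∑_u f(u) (φ/ω)(ur) ω(ur)/ω(r)`: every term tends to `0`, and submultiplicativity
dominates it by `‖φ/ω‖_∞ |f(u)| ω(u)`, which is summable, so dominated convergence for series applies.
-/

open Topology

theorem tendsto_zero_of_tendsto_ciSup {ι α : Type*} {l : Filter α} {g : ι → α → ℝ}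
    (hg : ∀ u r, 0 ≤ g u r) (hb : ∀ r, BddAbove (range fun u => g u r))
    (h : Tendsto (fun r => ⨆ u, g u r) l (𝓝 0)) (u : ι) : Tendsto (g u) l (𝓝 0) :=
  squeeze_zero (hg u) (fun r => le_ciSup (hb r) u) h

section Translation

/- `τ u` stands for the left translation `(u * ·)` or the right translation `(· * u)`. -/

variable {S : Type*} {ω : S → ℝ}

theorem IsC0w.exists_abs_le_mul (hω : ∀ s, 0 < ω s) {φ : S → ℝ} (hφ : IsC0w ω φ) :
    ∃ M, 0 ≤ M ∧ ∀ x, |φ x| ≤ M * ω x := by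
  obtain ⟨M, hM⟩ := (by simpa using (isC0_iff_tendsto.1 hφ).abs :
    Tendsto (fun x => |φ x / ω x|) cofinite (𝓝 0)).bddAbove_range_of_cofinite
  refine ⟨max M 0, le_max_right _ _, fun x => ?_⟩
  have hx : |φ x| / ω x ≤ max M 0 := by
    rw [← abs_of_pos (hω x), ← abs_div]
    exact (hM ⟨x, rfl⟩).trans (le_max_left _ _)
  rwa [div_le_iff₀ (hω x)] at hx

theorem isC0_indicator_div (τ : S → S → S) (hω : ∀ s, 0 < ω s)
    (hτ : ∀ u, Tendsto (fun r => ω (τ u r) / ω r) cofinite (𝓝 0)) (s t : S) :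
    IsC0 fun r => Set.indicator {r | τ t r = s} (1 : S → ℝ) r / ω r := by
  rw [isC0_iff_tendsto]
  have hlim : Tendsto (fun r => ω (τ t r) / ω r / ω s) cofinite (𝓝 0) := by
    simpa using (hτ t).div_const (ω s)
  refine squeeze_zero (fun r => div_nonneg (indicator_nonneg (fun _ _ => zero_le_one) r)
    (hω r).le) (fun r => ?_) hlim
  by_cases h : τ t r = s
  · have := (hω s).ne'
    simp only [h, mem_ofPred_eq, indicator_of_mem, Pi.one_apply]
    exact le_of_eq (by field_simp)
  · have := hω (τ t r); have := hω r; have := hω s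
    simp only [h, mem_ofPred_eq, not_false_eq_true, indicator_of_notMem, zero_div]
    positivity

theorem isC0w_tsum_mul_comp (τ : S → S → S) (hω : ∀ s, 0 < ω s)
    (hsub : ∀ u r, ω (τ u r) ≤ ω u * ω r)
    (hτ : ∀ u, Tendsto (fun r => ω (τ u r) / ω r) cofinite (𝓝 0))
    {φ : S → ℝ} (hφ : IsC0w ω φ) {f : S → ℝ} (hf : MemL1 ω f) :
    IsC0w ω fun r => ∑' u, f u * φ (τ u r) := by
  obtain ⟨M, hM0, hM⟩ := hφ.exists_abs_le_mul hω
  have hterm : ∀ u r, |f u * φ (τ u r) / ω r| ≤ M * |f u| * (ω (τ u r) / ω r) := by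
    intro u r
    rw [abs_div, abs_mul, abs_of_pos (hω r)]
    calc |f u| * |φ (τ u r)| / ω r ≤ |f u| * (M * ω (τ u r)) / ω r := by
          gcongr
          exacts [(hω r).le, hM _]
      _ = M * |f u| * (ω (τ u r) / ω r) := by ring
  have hdom : ∀ u r, M * |f u| * (ω (τ u r) / ω r) ≤ M * (|f u| * ω u) := by
    intro u r
    rw [← mul_assoc]
    gcongr
    rw [div_le_iff₀ (hω r)]
    exact hsub u r
  have hlim := tendsto_tsum_of_dominated_convergence (𝓕 := cofinite) (g := fun _ => (0 : ℝ))
    (f := fun r u => f u * φ (τ u r) / ω r) (hf.mul_left M)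
    (fun u => squeeze_zero_norm (hterm u) (by simpa using (hτ u).const_mul (M * |f u|)))
    (Eventually.of_forall fun r u => (hterm u r).trans (hdom u r))
  rw [IsC0w, isC0_iff_tendsto]
  simpa [tsum_div_const] using hlim

end Translation

/-- If `ω_l(t) = sup_s ω(st)/ω(t)` and `ω_r(t) = sup_s ω(ts)/ω(t)` both belong to `c₀(S)`,
then `1_{t⁻¹s}/ω, 1_{st⁻¹}/ω ∈ c₀(S)` for all `s,t`, so `ℓ¹(S,ω)` is a dual Banach algebra
with predual `c₀(S)`. -/
theorem dual_of_wl_wr_c0 {S : Type*} [Semigroup S] {ω : S → ℝ} (hω : IsWeight ω)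
    (hbl : ∀ t : S, BddAbove (Set.range fun s => ω (s * t) / ω t))
    (hbr : ∀ t : S, BddAbove (Set.range fun s => ω (t * s) / ω t))
    (hl : IsC0 fun t : S => ⨆ s : S, ω (s * t) / ω t)
    (hr : IsC0 fun t : S => ⨆ s : S, ω (t * s) / ω t) :
    (∀ s t : S,
        (IsC0 fun r => Set.indicator {r | t * r = s} (1 : S → ℝ) r / ω r) ∧
        (IsC0 fun r => Set.indicator {r | r * t = s} (1 : S → ℝ) r / ω r)) ∧
      (∀ φ : S → ℝ, IsC0w ω φ → ∀ f : S → ℝ, MemL1 ω f →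
        IsC0w ω (act f φ) ∧ IsC0w ω (actR f φ)) := by
  have hpos := hω.1
  have hdecayL : ∀ u, Tendsto (fun r => ω (u * r) / ω r) cofinite (𝓝 0) :=
    tendsto_zero_of_tendsto_ciSup (fun _ r => (div_pos (hpos _) (hpos r)).le) hbl
      (isC0_iff_tendsto.1 hl)
  have hdecayR : ∀ u, Tendsto (fun r => ω (r * u) / ω r) cofinite (𝓝 0) :=
    tendsto_zero_of_tendsto_ciSup (fun _ r => (div_pos (hpos _) (hpos r)).le) hbr
      (isC0_iff_tendsto.1 hr)
  have hsubR : ∀ u r, ω (r * u) ≤ ω u * ω r := fun u r => (hω.2 r u).trans_eq (mul_comm _ _)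
  exact ⟨fun s t => ⟨isC0_indicator_div (· * ·) hpos hdecayL s t,
      isC0_indicator_div (fun u r => r * u) hpos hdecayR s t⟩,
    fun φ hφ f hf => ⟨isC0w_tsum_mul_comp (· * ·) hpos hω.2 hdecayL hφ hf,
      isC0w_tsum_mul_comp (fun u r => r * u) hpos hsubR hdecayR hφ hf⟩⟩
end

section
/- Let ω and ω' be two locally equivalent weights on a semigroup S. If 1_{st⁻¹}/ω ∈ c₀(S) and 1_{t⁻¹s}/ω ∈ c₀(S) for all s, t ∈ S, then the same holds for ω'; hence ℓ¹(S,ω) is a dual Banach algebra with predual c₀(S) if and only if ℓ¹(S,ω') is. -/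
open Set Filter

/-! On `st⁻¹ ∪ t⁻¹s` the weights are comparable, `ω ≤ α ω'` and `ω' ≤ β⁻¹ ω`, so
`1/ω' ≤ α/ω` there and `1/ω ≤ β⁻¹/ω'`; a function dominated by a multiple of a `c₀` function is
`c₀`. -/

lemma IsC0.of_abs_le_mul {S : Type*} {g h : S → ℝ} {C : ℝ} (hC : 0 < C)
    (hgh : ∀ x, |g x| ≤ C * |h x|) (hh : IsC0 h) : IsC0 g := by
  intro ε hε
  refine (hh (ε / C) (by positivity)).subset fun x hx => ?_
  show ε / C ≤ |h x|
  rw [div_le_iff₀' hC]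
  exact hx.out.trans (hgh x)

lemma IsC0.indicator_div_of_le_mul {S : Type*} {A : Set S} {ω ω' : S → ℝ} {α : ℝ} (hα : 0 < α)
    (hω : ∀ r ∈ A, 0 < ω r) (hω' : ∀ r ∈ A, 0 < ω' r) (hle : ∀ r ∈ A, ω r ≤ α * ω' r)
    (hc : IsC0 fun r => A.indicator (1 : S → ℝ) r / ω r) :
    IsC0 fun r => A.indicator (1 : S → ℝ) r / ω' r := by
  refine hc.of_abs_le_mul hα fun r => ?_
  by_cases hr : r ∈ A
  · have hωr := hω r hr
    have hω'r := hω' r hr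
    simp only [Set.indicator_of_mem hr, Pi.one_apply, abs_div, abs_one, abs_of_pos hωr,
      abs_of_pos hω'r]
    rw [div_le_iff₀ hω'r, mul_one_div, div_mul_eq_mul_div, le_div_iff₀ hωr, one_mul]
    exact hle r hr
  · simp [Set.indicator_of_notMem hr]

lemma forall_isC0_indicator_div_of_le_mul {S : Type*} [Mul S] {ω ω' : S → ℝ}
    (hω : ∀ r, 0 < ω r) (hω' : ∀ r, 0 < ω' r)
    (hle : ∀ s t : S, ∃ α : ℝ, 0 < α ∧ ∀ r : S, (r * t = s ∨ t * r = s) → ω r ≤ α * ω' r)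
    (h : ∀ s t : S,
        (IsC0 fun r => Set.indicator {r | r * t = s} (1 : S → ℝ) r / ω r) ∧
        (IsC0 fun r => Set.indicator {r | t * r = s} (1 : S → ℝ) r / ω r))
    (s t : S) :
    (IsC0 fun r => Set.indicator {r | r * t = s} (1 : S → ℝ) r / ω' r) ∧
      (IsC0 fun r => Set.indicator {r | t * r = s} (1 : S → ℝ) r / ω' r) := by
  obtain ⟨α, hα, hαle⟩ := hle s t
  exact ⟨(h s t).1.indicator_div_of_le_mul hα (fun r _ => hω r) (fun r _ => hω' r)
      fun r hr => hαle r (Or.inl hr),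
    (h s t).2.indicator_div_of_le_mul hα (fun r _ => hω r) (fun r _ => hω' r)
      fun r hr => hαle r (Or.inr hr)⟩

/-- For locally equivalent weights `ω` and `ω'`, `ℓ¹(S,ω)` is a dual Banach algebra with
predual `c₀(S)` iff `ℓ¹(S,ω')` is; i.e. the condition `1_{st⁻¹}/ω, 1_{t⁻¹s}/ω ∈ c₀(S)`
(for all `s,t`) transfers between locally equivalent weights. -/
theorem dual_iff_of_locallyEquivalent {S : Type*} [Semigroup S] {ω ω' : S → ℝ}
    (hω : IsWeight ω) (hω' : IsWeight ω')
    (hle : ∀ s t : S, ∃ α β : ℝ, 0 < α ∧ 0 < β ∧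
      ∀ r : S, (r * t = s ∨ t * r = s) → β * ω' r ≤ ω r ∧ ω r ≤ α * ω' r) :
    (∀ s t : S,
        (IsC0 fun r => Set.indicator {r | r * t = s} (1 : S → ℝ) r / ω r) ∧
        (IsC0 fun r => Set.indicator {r | t * r = s} (1 : S → ℝ) r / ω r)) ↔
      (∀ s t : S,
        (IsC0 fun r => Set.indicator {r | r * t = s} (1 : S → ℝ) r / ω' r) ∧
        (IsC0 fun r => Set.indicator {r | t * r = s} (1 : S → ℝ) r / ω' r)) := by
  refine ⟨forall_isC0_indicator_div_of_le_mul hω.1 hω'.1 fun s t => ?_,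
    forall_isC0_indicator_div_of_le_mul hω'.1 hω.1 fun s t => ?_⟩
  · obtain ⟨α, _, hα, _, hαβ⟩ := hle s t
    exact ⟨α, hα, fun r hr => (hαβ r hr).2⟩
  · obtain ⟨_, β, _, hβ, hαβ⟩ := hle s t
    refine ⟨β⁻¹, inv_pos.2 hβ, fun r hr => ?_⟩
    rw [← div_eq_inv_mul, le_div_iff₀ hβ, mul_comm]
    exact (hαβ r hr).1
end

section
/- Let S = (ℕ, min), where m ∧ n = min(m,n), and let ω be a weight on S. Then ℓ¹(S,ω) is a dual Banach algebra with predual c₀(S) (i.e. 1_{t⁻¹s}/ω ∈ c₀(S) for all s,t) if and only if 1/ω ∈ c₀(ℕ), i.e. ω(n) → ∞ as n → ∞. -/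
open Set Filter

theorem IsC0.mono {S : Type*} {g h : S → ℝ} (hh : IsC0 h) (hgh : ∀ x, |g x| ≤ |h x|) :
    IsC0 g :=
  fun ε hε => (hh ε hε).subset fun _ hx => hx.trans (hgh _)

theorem abs_indicator_one_div_le {S : Type*} (A : Set S) (c : S → ℝ) (x : S) :
    |A.indicator 1 x / c x| ≤ |1 / c x| := by
  by_cases hx : x ∈ A <;> simp [hx]

theorem nat_min_dual_iff_general {ω : ℕ → ℝ} :
    (∀ s t : ℕ, IsC0 fun r => Set.indicator {r : ℕ | min t r = s} (1 : ℕ → ℝ) r / ω r) ↔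
      IsC0 fun n : ℕ => 1 / ω n := by
  refine ⟨fun h => ?_, fun h _ _ => h.mono (abs_indicator_one_div_le _ ω)⟩
  -- `0⁻¹0 = {r | min 0 r = 0}` is all of `ℕ`
  simpa using h 0 0

/-- For `S = (ℕ, min)` and a weight `ω`, `ℓ¹(S,ω)` is a dual Banach algebra with predual
`c₀(S)` (i.e. `1_{t⁻¹s}/ω ∈ c₀(S)` for all `s,t`) iff `1/ω ∈ c₀(ℕ)`. -/
theorem nat_min_dual_iff {ω : ℕ → ℝ} (hpos : ∀ n, 0 < ω n)
    (hsub : ∀ m n : ℕ, ω (min m n) ≤ ω m * ω n) :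
    (∀ s t : ℕ, IsC0 fun r => Set.indicator {r : ℕ | min t r = s} (1 : ℕ → ℝ) r / ω r) ↔
      IsC0 fun n : ℕ => 1 / ω n :=
  nat_min_dual_iff_general
end

section
/- Let ω be a weight on S = (ℤ, min) and let ω_ℕ be its restriction to ℕ. Then 1_{(m∧n⁻¹)}/ω ∈ c₀(ℤ) for all m, n ∈ ℤ if and only if 1/ω_ℕ ∈ c₀(ℕ). Consequently, ℓ¹((ℤ,min), ω) is a dual Banach algebra with predual c₀(ℤ) if and only if ω(n) → ∞ as n → +∞. -/
/-!
The fibre `m ∧ n⁻¹ = {k | min m k = n}` is `{n}` if `n < m`, empty if `n > m`, and the ray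
`[m, ∞)` if `n = m`. Finite fibres give `c₀` functions for free; for a ray, the cofinite filter
on `ℤ` is `atBot ⊔ atTop` and the ray is eventually empty towards `-∞`, so `1_{[m,∞)}/ω ∈ c₀(ℤ)`
says exactly that `1/ω → 0` at `+∞`. For positive `ω` this means `ω → ∞`, and on `ℕ` the
cofinite filter is `atTop`, which gives the condition on `ω_ℕ`.
-/

open Set Filter

open Topology

theorem setOf_min_eq_self {α : Type*} [LinearOrder α] (m : α) : {k | min m k = m} = Ici m := by
  ext k
  simp

theorem setOf_min_eq_subset_singleton {α : Type*} [LinearOrder α] {m n : α} (h : n ≠ m) :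
    {k | min m k = n} ⊆ {n} := by
  intro k hk
  rcases min_choice m k with hmin | hmin <;> simp_all

theorem indicator_one_div {ι 𝕜 : Type*} [DivisionRing 𝕜] (s : Set ι) (f : ι → 𝕜) :
    (fun k => s.indicator 1 k / f k) = s.indicator (fun k => 1 / f k) := by
  funext k
  by_cases hk : k ∈ s <;> simp [hk]

theorem tendsto_indicator_cofinite_of_finite {ι M : Type*} [Zero M] [TopologicalSpace M]
    {s : Set ι} (hs : s.Finite) (g : ι → M) : Tendsto (s.indicator g) cofinite (𝓝 0) :=
  tendsto_const_nhds.congr' <| eventuallyEq_of_mem hs.compl_mem_cofinite fun _ hk =>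
    (indicator_of_notMem hk g).symm

theorem Int.tendsto_indicator_Ici_cofinite_iff {M : Type*} [Zero M] [TopologicalSpace M]
    (m : ℤ) (g : ℤ → M) :
    Tendsto ((Ici m).indicator g) cofinite (𝓝 0) ↔ Tendsto g atTop (𝓝 0) := by
  have hbot : Tendsto ((Ici m).indicator g) atBot (𝓝 0) :=
    tendsto_const_nhds.congr' <| (eventually_lt_atBot m).mono fun k hk =>
      (indicator_of_notMem (not_le.2 hk) g).symm
  have htop : (Ici m).indicator g =ᶠ[atTop] g :=
    (eventually_ge_atTop m).mono fun _ hk => indicator_of_mem (mem_Ici.2 hk) g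
  rw [Int.cofinite_eq, tendsto_sup, tendsto_congr' htop]
  exact and_iff_right hbot

theorem Int.forall_isC0_indicator_setOf_min_eq_iff (u : ℤ → ℝ) :
    (∀ m n : ℤ, IsC0 ({k | min m k = n}.indicator u)) ↔ Tendsto u atTop (𝓝 0) := by
  simp only [isC0_iff_tendsto]
  refine ⟨fun h => ?_, fun h m n => ?_⟩
  · simpa only [setOf_min_eq_self, Int.tendsto_indicator_Ici_cofinite_iff] using h 0 0
  · obtain rfl | hnm := eq_or_ne n m
    · rwa [setOf_min_eq_self, Int.tendsto_indicator_Ici_cofinite_iff]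
    · exact tendsto_indicator_cofinite_of_finite
        ((finite_singleton n).subset (setOf_min_eq_subset_singleton hnm)) u

theorem tendsto_one_div_nhds_zero_iff {α 𝕜 : Type*} [Field 𝕜] [LinearOrder 𝕜]
    [IsStrictOrderedRing 𝕜] [TopologicalSpace 𝕜] [OrderTopology 𝕜] {l : Filter α} {f : α → 𝕜}
    (hf : ∀ x, 0 < f x) : Tendsto (fun x => 1 / f x) l (𝓝 0) ↔ Tendsto f l atTop := by
  refine ⟨fun h => ?_, fun h => by simpa only [Pi.inv_def, one_div] using h.inv_tendsto_atTop⟩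
  have h' : Tendsto (fun x => 1 / f x) l (𝓝[>] 0) :=
    tendsto_nhdsWithin_iff.2 ⟨h, Eventually.of_forall fun x => one_div_pos.2 (hf x)⟩
  simpa only [Pi.inv_def, one_div, inv_inv] using h'.inv_tendsto_nhdsGT_zero

theorem int_min_dual_iff_general {ω : ℤ → ℝ} (hpos : ∀ n, 0 < ω n) :
    ((∀ m n : ℤ, IsC0 fun k => Set.indicator {k : ℤ | min m k = n} (1 : ℤ → ℝ) k / ω k) ↔
      IsC0 fun n : ℕ => 1 / ω (n : ℤ)) ∧
    ((∀ m n : ℤ, IsC0 fun k => Set.indicator {k : ℤ | min m k = n} (1 : ℤ → ℝ) k / ω k) ↔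
      Filter.Tendsto ω Filter.atTop Filter.atTop) := by
  have hfibres :
      (∀ m n : ℤ, IsC0 fun k => Set.indicator {k : ℤ | min m k = n} (1 : ℤ → ℝ) k / ω k) ↔
        Tendsto (fun k => 1 / ω k) atTop (𝓝 0) := by
    simpa only [indicator_one_div] using Int.forall_isC0_indicator_setOf_min_eq_iff fun k => 1 / ω k
  have hnat : (IsC0 fun n : ℕ => 1 / ω (n : ℤ)) ↔ Tendsto (fun k => 1 / ω k) atTop (𝓝 0) := by
    rw [isC0_iff_tendsto, Nat.cofinite_eq_atTop, ← Nat.map_cast_int_atTop, tendsto_map'_iff]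
    rfl
  exact ⟨hfibres.trans hnat.symm, hfibres.trans (tendsto_one_div_nhds_zero_iff hpos)⟩

/-- For a weight `ω` on `(ℤ, min)`: `1_{m∧n⁻¹}/ω ∈ c₀(ℤ)` for all `m,n` iff
`1/ω_ℕ ∈ c₀(ℕ)`; consequently `ℓ¹((ℤ,min),ω)` is a dual Banach algebra with predual
`c₀(ℤ)` iff `ω(n) → ∞` as `n → +∞`. -/
theorem int_min_dual_iff {ω : ℤ → ℝ} (hpos : ∀ n, 0 < ω n)
    (hsub : ∀ m n : ℤ, ω (min m n) ≤ ω m * ω n) :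
    ((∀ m n : ℤ, IsC0 fun k => Set.indicator {k : ℤ | min m k = n} (1 : ℤ → ℝ) k / ω k) ↔
      IsC0 fun n : ℕ => 1 / ω (n : ℤ)) ∧
    ((∀ m n : ℤ, IsC0 fun k => Set.indicator {k : ℤ | min m k = n} (1 : ℤ → ℝ) k / ω k) ↔
      Filter.Tendsto ω Filter.atTop Filter.atTop) :=
  int_min_dual_iff_general hpos
end

section
/- Let S be a locally compact Hausdorff topological semigroup such that FK⁻¹ and K⁻¹F are relatively compact for all compact subsets F, K of S. Then for every μ ∈ M_b(S) and f ∈ C₀(S), the functions s ↦ ∫_S f(ts) dμ(t) and s ↦ ∫_S f(st) dμ(t) belong to C₀(S); i.e. the measure algebra M_b(S) is a dual Banach algebra with predual C₀(S). -/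
open Filter MeasureTheory Topology Set

/-! A finite regular measure on a Hausdorff space is tight, so up to an arbitrarily small error
an integral against `μ` only sees the integrand on one compact set `K`. Joint continuity of the
multiplication makes `t ↦ f (t * s)` converge uniformly on `K` as `s → s₀`, which gives
continuity. If `|f| < ε` off the compact set `F`, then `|f (k * s)| < ε` for all `k ∈ K` as soon
as `s` lies outside the compact closure of `K⁻¹F`, which gives vanishing at infinity. -/

section

variable {X Y Z E : Type*} [TopologicalSpace Y] [TopologicalSpace Z] [NormedAddCommGroup E]

theorem ZeroAtInftyContinuousMap.tendstoUniformlyOn_comp_cocompact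
    (f : ZeroAtInftyContinuousMap Z E) {g : X → Y → Z} {K : Set X}
    (hg : ∀ F, IsCompact F → IsCompact (closure {y | ∃ x ∈ K, g x y ∈ F})) :
    TendstoUniformlyOn (fun y x => f (g x y)) 0 (cocompact Y) K := by
  rw [Metric.tendstoUniformlyOn_iff]
  intro ε hε
  obtain ⟨F, hF, hfF⟩ := hasBasis_cocompact.eventually_iff.1
    (NormedAddGroup.tendsto_nhds_zero.1 (zero_at_infty f) ε hε)
  filter_upwards [(hg F hF).compl_mem_cocompact] with y hy x hx
  have : g x y ∉ F := fun h => hy (subset_closure ⟨x, hx, h⟩)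
  simpa using hfF this

variable [TopologicalSpace X]

theorem Continuous.tendstoUniformlyOn_isCompact_nhds {W : Type*} [UniformSpace W]
    {h : X → Y → W} (hh : Continuous fun p : X × Y => h p.1 p.2) {K : Set X} (hK : IsCompact K)
    (y₀ : Y) : TendstoUniformlyOn (fun y x => h x y) (h · y₀) (𝓝 y₀) K :=
  ContinuousMap.tendsto_iff_forall_isCompact_tendstoUniformlyOn.1
    ((ContinuousMap.curry ⟨fun p : Y × X => h p.2 p.1, hh.comp continuous_swap⟩).continuous
      |>.tendsto y₀) K hK

variable [MeasurableSpace X] [NormedSpace ℝ E] {μ : Measure X} [IsFiniteMeasure μ]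

theorem tendsto_integral_of_tendstoUniformlyOn_isCompact [T2Space X] [OpensMeasurableSpace X]
    (hμ : IsTightMeasureSet {μ}) {ι : Type*} {l : Filter ι} {F : ι → X → E} {M : ℝ}
    (hF_bound : ∀ i x, ‖F i x‖ ≤ M) (hF_unif : ∀ K, IsCompact K → TendstoUniformlyOn F 0 l K) :
    Tendsto (fun i => ∫ x, F i x ∂μ) l (𝓝 0) := by
  have key : ∀ K, IsCompact K → ∀ δ > 0,
      ∀ᶠ i in l, ‖∫ x, F i x ∂μ‖ ≤ δ * μ.real univ + M * μ.real Kᶜ := by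
    intro K hK δ hδ
    filter_upwards [Metric.tendstoUniformlyOn_iff.1 (hF_unif K hK) δ hδ] with i hi
    have hle : ∀ x, ‖F i x‖ ≤ δ + Kᶜ.indicator (fun _ => M) x := by
      intro x
      by_cases hx : x ∈ K
      · simpa [hx] using (hi x hx).le
      · simpa [hx] using (hF_bound i x).trans (le_add_of_nonneg_left hδ.le)
    have hint : Integrable (fun x => Kᶜ.indicator (fun _ => M) x) μ :=
      (integrable_const M).indicator hK.measurableSet.compl
    calc ‖∫ x, F i x ∂μ‖ ≤ ∫ x, (δ + Kᶜ.indicator (fun _ => M) x) ∂μ :=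
          norm_integral_le_of_norm_le ((integrable_const δ).add hint) (ae_of_all _ hle)
      _ = δ * μ.real univ + M * μ.real Kᶜ := by
          rw [integral_add (integrable_const δ) hint, integral_const,
            integral_indicator_const _ hK.measurableSet.compl]
          simp [mul_comm]
  rw [NormedAddGroup.tendsto_nhds_zero]
  intro ε hε
  obtain ⟨K, hK, hKμ⟩ := isTightMeasureSet_iff_exists_isCompact_measure_compl_le.1 hμ
    (ENNReal.ofReal (ε / 2 / (|M| + 1))) (ENNReal.ofReal_pos.2 (by positivity))
  have hKc : M * μ.real Kᶜ < ε / 2 := by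
    have h1 : μ.real Kᶜ ≤ ε / 2 / (|M| + 1) :=
      ENNReal.toReal_le_of_le_ofReal (by positivity) (hKμ μ rfl)
    calc M * μ.real Kᶜ ≤ |M| * (ε / 2 / (|M| + 1)) :=
          (mul_le_mul_of_nonneg_right (le_abs_self M) measureReal_nonneg).trans
            (mul_le_mul_of_nonneg_left h1 (abs_nonneg M))
      _ < ε / 2 := by
          rw [mul_div_assoc', div_lt_iff₀ (by positivity)]
          nlinarith [abs_nonneg M]
  have hδ : ε / 2 / (μ.real univ + 1) * μ.real univ ≤ ε / 2 := by
    rw [div_mul_eq_mul_div, div_le_iff₀ (by positivity)]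
    nlinarith [measureReal_nonneg (μ := μ) (s := univ)]
  filter_upwards [key K hK (ε / 2 / (μ.real univ + 1)) (by positivity)] with i hi
  linarith

theorem BoundedContinuousFunction.continuous_integral_comp [T2Space X] [OpensMeasurableSpace X]
    [SecondCountableTopology E]
    (hμ : IsTightMeasureSet {μ}) (f : BoundedContinuousFunction Z E) {g : X → Y → Z}
    (hg : Continuous fun p : X × Y => g p.1 p.2) :
    Continuous fun y => ∫ x, f (g x y) ∂μ := by
  have hint : ∀ y, Integrable (fun x => f (g x y)) μ := fun y =>
    .of_bound (f.continuous.comp (hg.comp (.prodMk_left y))).aestronglyMeasurable ‖f‖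
      (ae_of_all _ fun x => f.norm_coe_le_norm _)
  refine continuous_iff_continuousAt.2 fun y₀ => tendsto_sub_nhds_zero_iff.1 ?_
  simp_rw [← integral_sub (hint _) (hint y₀)]
  refine tendsto_integral_of_tendstoUniformlyOn_isCompact hμ (M := ‖f‖ + ‖f‖)
    (fun y x => (norm_sub_le _ _).trans
      (add_le_add (f.norm_coe_le_norm _) (f.norm_coe_le_norm _)))
    fun K hK => ?_
  have := Metric.tendstoUniformlyOn_iff.1
    (Continuous.tendstoUniformlyOn_isCompact_nhds (h := fun x y => f (g x y))
      (f.continuous.comp hg) hK y₀)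
  refine Metric.tendstoUniformlyOn_iff.2 fun ε hε => ?_
  simpa [dist_eq_norm, norm_sub_rev] using this ε hε

theorem ZeroAtInftyContinuousMap.tendsto_integral_comp_cocompact [T2Space X]
    [OpensMeasurableSpace X] (hμ : IsTightMeasureSet {μ}) (f : ZeroAtInftyContinuousMap Z E)
    {g : X → Y → Z}
    (hg : ∀ F K, IsCompact F → IsCompact K → IsCompact (closure {y | ∃ x ∈ K, g x y ∈ F})) :
    Tendsto (fun y => ∫ x, f (g x y) ∂μ) (cocompact Y) (𝓝 0) :=
  tendsto_integral_of_tendstoUniformlyOn_isCompact hμ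
    (fun y x => f.toBCF.norm_coe_le_norm (g x y))
    (fun K hK => f.tendstoUniformlyOn_comp_cocompact fun F hF => hg F K hF hK)

end

theorem measureAlgebra_dual_general {S : Type*} [TopologicalSpace S] [T2Space S]
    [Semigroup S] [ContinuousMul S]
    [MeasurableSpace S] [BorelSpace S]
    (h : ∀ F K : Set S, IsCompact F → IsCompact K →
      IsCompact (closure {r : S | ∃ k ∈ K, r * k ∈ F}) ∧
      IsCompact (closure {r : S | ∃ k ∈ K, k * r ∈ F}))
    (μ : Measure S) [IsFiniteMeasure μ] [μ.Regular]
    (f : ZeroAtInftyContinuousMap S ℝ) :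
    (Continuous fun s => ∫ t, f (t * s) ∂μ) ∧
    (Tendsto (fun s => ∫ t, f (t * s) ∂μ) (cocompact S) (nhds 0)) ∧
    (Continuous fun s => ∫ t, f (s * t) ∂μ) ∧
    (Tendsto (fun s => ∫ t, f (s * t) ∂μ) (cocompact S) (nhds 0)) := by
  have hμ : IsTightMeasureSet {μ} := isTightMeasureSet_singleton_of_innerRegular
  exact ⟨f.toBCF.continuous_integral_comp hμ continuous_mul,
    f.tendsto_integral_comp_cocompact hμ fun F K hF hK => (h F K hF hK).2,
    f.toBCF.continuous_integral_comp hμ (continuous_snd.mul continuous_fst),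
    f.tendsto_integral_comp_cocompact hμ fun F K hF hK => (h F K hF hK).1⟩

/-- If `FK⁻¹` and `K⁻¹F` are relatively compact for all compact `F, K ⊆ S`, then the
measure algebra `M_b(S)` is a dual Banach algebra with predual `C₀(S)`: for every bounded
Radon measure `μ` and `f ∈ C₀(S)`, the functions `s ↦ ∫ f(ts) dμ(t)` and
`s ↦ ∫ f(st) dμ(t)` belong to `C₀(S)`. -/
theorem measureAlgebra_dual {S : Type*} [TopologicalSpace S] [T2Space S]
    [LocallyCompactSpace S] [Semigroup S] [ContinuousMul S]
    [MeasurableSpace S] [BorelSpace S]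
    (h : ∀ F K : Set S, IsCompact F → IsCompact K →
      IsCompact (closure {r : S | ∃ k ∈ K, r * k ∈ F}) ∧
      IsCompact (closure {r : S | ∃ k ∈ K, k * r ∈ F}))
    (μ : Measure S) [IsFiniteMeasure μ] [μ.Regular]
    (f : ZeroAtInftyContinuousMap S ℝ) :
    (Continuous fun s => ∫ t, f (t * s) ∂μ) ∧
    (Tendsto (fun s => ∫ t, f (t * s) ∂μ) (cocompact S) (nhds 0)) ∧
    (Continuous fun s => ∫ t, f (s * t) ∂μ) ∧
    (Tendsto (fun s => ∫ t, f (s * t) ∂μ) (cocompact S) (nhds 0)) :=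
  measureAlgebra_dual_general h μ f
end
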